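/- The point P = (2t³(t+1), 2t²(t+1)²(t-2)²) on the elliptic curve E : v² = u(u - 8t(t²-1))(u - (t²-1)(t+2)²) over ℚ(t) has infinite order in E(ℚ(t)). -/

import Mathlib

/-!
If `P` had finite order `m`, then for some nonzero `2`-torsion point `T` one of `P`, `T`, `P + T`
would lie in `2E(K)`: `P` itself when `m` is odd, and otherwise `T = (m/2)P` or `P + T` according to
the parity of `m/2`. On `y² = (x - e₁)(x - e₂)(x - e₃)` the `2`-torsion points are the `(eᵢ, 0)`,
and every `x - eᵢ` is a square at a point `(x, y)` of `2E(K)`. For the given `P` each resulting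
condition makes a square of `ℚ(t)` out of a polynomial with a root of odd multiplicity.
-/

open RatFunc

/-- The elliptic curve `v² = u(u - 8t(t²-1))(u - (t²-1)(t+2)²)` over `ℚ(t)`, in affine
Weierstrass form `v² = u³ - (α+β)u² + αβ·u` with `α = 8t(t²-1)`, `β = (t²-1)(t+2)²`. -/
noncomputable def Ecurve : WeierstrassCurve.Affine (RatFunc ℚ) :=
  { a₁ := 0
    a₂ := -(8 * X * (X ^ 2 - 1) + (X ^ 2 - 1) * (X + 2) ^ 2)
    a₃ := 0
    a₄ := 8 * X * (X ^ 2 - 1) * ((X ^ 2 - 1) * (X + 2) ^ 2)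
    a₆ := 0 }

theorem RatFunc.not_isSquare_algebraMap_of_odd_rootMultiplicity {K : Type*} [Field K]
    {p : Polynomial K} {c : K} (hp : Odd (p.rootMultiplicity c)) :
    ¬ IsSquare (algebraMap (Polynomial K) (RatFunc K) p) := by
  rintro ⟨r, hr⟩
  have hp0 : p ≠ 0 := by rintro rfl; simp at hp
  have hr0 : r ≠ 0 := by rintro rfl; simp_all
  have hden : r.denom ≠ 0 := r.denom_ne_zero
  have hnum : r.num ≠ 0 := num_ne_zero hr0
  have hcleared : p * (r.denom * r.denom) = r.num * r.num := by
    apply algebraMap_injective K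
    have hnum_eq := (div_eq_iff (algebraMap_ne_zero hden)).mp (num_div_denom r)
    rw [map_mul, map_mul, map_mul, hr, hnum_eq]
    ring
  have hmult := congrArg (Polynomial.rootMultiplicity c) hcleared
  rw [Polynomial.rootMultiplicity_mul (mul_ne_zero hp0 (mul_ne_zero hden hden)),
    Polynomial.rootMultiplicity_mul (mul_ne_zero hden hden),
    Polynomial.rootMultiplicity_mul (mul_ne_zero hnum hnum)] at hmult
  obtain ⟨k, hk⟩ := hp
  omega

theorem RatFunc.not_isSquare_algebraMap_X_sub_C_pow_mul {K : Type*} [Field K] {c : K} {k : ℕ}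
    (hk : Odd k) {q : Polynomial K} (hq : q.eval c ≠ 0) :
    ¬ IsSquare
      (algebraMap (Polynomial K) (RatFunc K) ((Polynomial.X - Polynomial.C c) ^ k * q)) := by
  have hq0 : q ≠ 0 := by rintro rfl; simp at hq
  apply not_isSquare_algebraMap_of_odd_rootMultiplicity
  rwa [Polynomial.rootMultiplicity_mul
      (mul_ne_zero (pow_ne_zero _ (Polynomial.X_sub_C_ne_zero c)) hq0),
    Polynomial.rootMultiplicity_X_sub_C_pow, Polynomial.rootMultiplicity_eq_zero hq, add_zero]

theorem IsOfFinAddOrder.exists_eq_two_nsmul_or_two_torsion {G : Type*} [AddMonoid G] {P : G}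
    (hP : IsOfFinAddOrder P) :
    (∃ Q, P = 2 • Q) ∨
      ∃ T, T ≠ 0 ∧ 2 • T = 0 ∧ ((∃ Q, T = 2 • Q) ∨ ∃ Q, P + T = 2 • Q) := by
  have hm := hP.addOrderOf_pos
  have hmP : addOrderOf P • P = 0 := addOrderOf_nsmul_eq_zero P
  rcases Nat.even_or_odd' (addOrderOf P) with ⟨k, hk | hk⟩
  · right
    refine ⟨k • P, fun h0 => ?_, by rw [← mul_nsmul', ← hk, hmP], ?_⟩
    · have := Nat.le_of_dvd (by omega) (addOrderOf_dvd_of_nsmul_eq_zero h0)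
      omega
    rcases Nat.even_or_odd' k with ⟨j, hj | hj⟩
    · exact Or.inl ⟨j • P, by rw [← mul_nsmul', hj]⟩
    · exact Or.inr ⟨(j + 1) • P, by
        rw [← mul_nsmul', ← succ_nsmul', show 2 * (j + 1) = k + 1 by omega]⟩
  · left
    exact ⟨(k + 1) • P, by
      rw [← mul_nsmul', show 2 * (k + 1) = addOrderOf P + 1 by omega, succ_nsmul', hmP,
        add_zero]⟩

namespace WeierstrassCurve.Affine

variable {F : Type*} [Field F]

structure IsSplitCubic (W : Affine F) (e₁ e₂ e₃ : F) : Prop where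
  a₁_eq : W.a₁ = 0
  a₂_eq : W.a₂ = -(e₁ + e₂ + e₃)
  a₃_eq : W.a₃ = 0
  a₄_eq : W.a₄ = e₁ * e₂ + e₁ * e₃ + e₂ * e₃
  a₆_eq : W.a₆ = -(e₁ * e₂ * e₃)

namespace IsSplitCubic

variable {W : Affine F} {e₁ e₂ e₃ : F} (hW : W.IsSplitCubic e₁ e₂ e₃)
include hW

theorem swap₁₂ : W.IsSplitCubic e₂ e₁ e₃ where
  a₁_eq := hW.a₁_eq
  a₂_eq := by rw [hW.a₂_eq]; ring
  a₃_eq := hW.a₃_eq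
  a₄_eq := by rw [hW.a₄_eq]; ring
  a₆_eq := by rw [hW.a₆_eq]; ring

theorem swap₂₃ : W.IsSplitCubic e₁ e₃ e₂ where
  a₁_eq := hW.a₁_eq
  a₂_eq := by rw [hW.a₂_eq]; ring
  a₃_eq := hW.a₃_eq
  a₄_eq := by rw [hW.a₄_eq]; ring
  a₆_eq := by rw [hW.a₆_eq]; ring

theorem negY_eq (x y : F) : W.negY x y = -y := by
  simp [negY, hW.a₁_eq, hW.a₃_eq]

theorem equation_iff {x y : F} : W.Equation x y ↔ y ^ 2 = (x - e₁) * (x - e₂) * (x - e₃) := by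
  rw [Affine.equation_iff, hW.a₁_eq, hW.a₂_eq, hW.a₃_eq, hW.a₄_eq, hW.a₆_eq]
  constructor <;> intro h <;> linear_combination h

theorem nonsingular_of_two_mul_ne_zero {x y : F} (hxy : y ^ 2 = (x - e₁) * (x - e₂) * (x - e₃))
    (hy : 2 * y ≠ 0) : W.Nonsingular x y :=
  (nonsingular_iff' x y).mpr ⟨hW.equation_iff.mpr hxy,
    Or.inr (by rwa [hW.a₁_eq, hW.a₃_eq, zero_mul, add_zero, add_zero])⟩

theorem isSquare_X_sub_of_eq_two_nsmul [DecidableEq F] {x y : F} {h : W.Nonsingular x y}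
    {Q : W.Point} (hQ : Point.some x y h = 2 • Q) : IsSquare (x - e₁) := by
  rw [two_nsmul] at hQ
  rcases Q with _ | ⟨xQ, yQ, hQns⟩
  · rw [← Point.zero_def, add_zero] at hQ
    exact absurd hQ (Point.some_ne_zero h)
  by_cases hyQ : yQ = W.negY xQ yQ
  · rw [Point.add_self_of_Y_eq hyQ] at hQ
    exact absurd hQ (Point.some_ne_zero h)
  rw [Point.add_self_of_Y_ne hyQ, Point.some.injEq] at hQ
  have h2yQ : 2 * yQ ≠ 0 := fun h0 => hyQ (by rw [hW.negY_eq]; linear_combination h0)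
  have h2 : (2 : F) ≠ 0 := left_ne_zero_of_mul h2yQ
  have hyQ0 : yQ ≠ 0 := right_ne_zero_of_mul h2yQ
  have hcurve := hW.equation_iff.mp hQns.1
  -- in the coordinate `x - e₁` the curve is `y² = x³ + a x² + b x` with `b = (e₁ - e₂)(e₁ - e₃)`,
  -- on which the duplication formula reads `x(2Q) = ((x² - b) / 2y)²`
  refine ⟨((xQ - e₁) ^ 2 - (e₁ - e₂) * (e₁ - e₃)) / (2 * yQ), ?_⟩
  rw [hQ.1, addX, slope_of_Y_ne rfl hyQ, hW.negY_eq, hW.a₁_eq, hW.a₂_eq, hW.a₄_eq,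
    show yQ - -yQ = 2 * yQ by ring]
  field_simp
  linear_combination (4 * e₂ + 4 * e₃ - 8 * xQ) * hcurve

theorem exists_eq_some_of_two_nsmul_eq_zero [DecidableEq F] (h2 : (2 : F) ≠ 0) {T : W.Point}
    (hT0 : T ≠ 0) (hT : 2 • T = 0) :
    ∃ e, ∃ h : W.Nonsingular e 0, T = Point.some e 0 h ∧ (e = e₁ ∨ e = e₂ ∨ e = e₃) := by
  rcases T with _ | ⟨x, y, h⟩
  · exact absurd Point.zero_def.symm hT0
  have hy : y = 0 := by
    by_contra hy
    have hyneg : y ≠ W.negY x y := fun h' => hy <| by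
      rw [hW.negY_eq] at h'
      exact (mul_eq_zero.mp (by linear_combination h' : 2 * y = 0)).resolve_left h2
    rw [two_nsmul, Point.add_self_of_Y_ne hyneg] at hT
    exact Point.some_ne_zero _ hT
  subst hy
  have hroot : (x - e₁) * (x - e₂) * (x - e₃) = 0 := by
    linear_combination -(hW.equation_iff.mp h.1)
  exact ⟨x, h, rfl, by simpa only [mul_eq_zero, sub_eq_zero, or_assoc] using hroot⟩

theorem isSquare_mul_of_add_eq_two_nsmul [DecidableEq F] {x y : F} {h : W.Nonsingular x y}
    {hT : W.Nonsingular e₁ 0} (hx : x ≠ e₁) {Q : W.Point}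
    (hQ : Point.some x y h + Point.some e₁ 0 hT = 2 • Q) :
    IsSquare ((e₁ - e₂) * (x - e₁) * (x - e₃)) := by
  rw [Point.add_of_X_ne hx] at hQ
  -- `x(P + T) - e₂ = (e₁ - e₂)(x - e₃) / (x - e₁)`
  obtain ⟨r, hr⟩ := hW.swap₁₂.isSquare_X_sub_of_eq_two_nsmul hQ
  have hcurve := hW.equation_iff.mp h.1
  rw [addX, slope_of_X_ne hx, hW.a₁_eq, hW.a₂_eq] at hr
  refine ⟨r * (x - e₁), ?_⟩
  field_simp at hr
  linear_combination hr - hcurve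

end IsSplitCubic

end WeierstrassCurve.Affine

section

local notation "α" => (8 * X * (X ^ 2 - 1) : RatFunc ℚ)
local notation "β" => ((X ^ 2 - 1) * (X + 2) ^ 2 : RatFunc ℚ)
local notation "xP" => (2 * X ^ 3 * (X + 1) : RatFunc ℚ)
local notation "yP" => (2 * X ^ 2 * (X + 1) ^ 2 * (X - 2) ^ 2 : RatFunc ℚ)

open WeierstrassCurve.Affine

theorem isSplitCubic_Ecurve : Ecurve.IsSplitCubic 0 α β where
  a₁_eq := rfl
  a₂_eq := by rw [zero_add]; rfl
  a₃_eq := rfl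
  a₄_eq := by rw [zero_mul, zero_mul, zero_add, zero_add]; rfl
  a₆_eq := by rw [zero_mul, zero_mul, neg_zero]; rfl

theorem not_isSquare_xP : ¬ IsSquare xP := by
  convert not_isSquare_algebraMap_X_sub_C_pow_mul (K := ℚ) (c := -1) odd_one
    (q := 2 * Polynomial.X ^ 3) (by norm_num) using 2
  simp only [map_neg, map_one, sub_neg_eq_add, pow_one, map_mul, map_add, algebraMap_X, map_ofNat,
    map_pow]
  ring

theorem not_isSquare_neg_α : ¬ IsSquare (-α) := by
  convert not_isSquare_algebraMap_X_sub_C_pow_mul (K := ℚ) (c := 0) odd_one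
    (q := -8 * (Polynomial.X ^ 2 - 1)) (by norm_num) using 2
  simp only [map_zero, sub_zero, pow_one, neg_mul, mul_neg, map_neg, map_mul, algebraMap_X,
    map_ofNat, map_sub, map_pow, map_one, neg_inj]
  ring

theorem not_isSquare_α : ¬ IsSquare α := by
  convert not_isSquare_algebraMap_X_sub_C_pow_mul (K := ℚ) (c := 0) odd_one
    (q := 8 * (Polynomial.X ^ 2 - 1)) (by norm_num) using 2
  simp only [map_zero, sub_zero, pow_one, map_mul, algebraMap_X, map_ofNat, map_sub, map_pow,
    map_one]
  ring

theorem not_isSquare_β : ¬ IsSquare β := by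
  convert not_isSquare_algebraMap_X_sub_C_pow_mul (K := ℚ) (c := 1) odd_one
    (q := (Polynomial.X + 1) * (Polynomial.X + 2) ^ 2) (by norm_num) using 2
  simp only [map_one, pow_one, map_mul, map_sub, algebraMap_X, map_add, map_pow, map_ofNat]
  ring

theorem not_isSquare_neg_α_mul : ¬ IsSquare (-α * xP * (xP - β)) := by
  convert not_isSquare_algebraMap_X_sub_C_pow_mul (K := ℚ) (c := 1) odd_one
    (q := -16 * Polynomial.X ^ 4 * (Polynomial.X + 1) ^ 4 * (Polynomial.X - 2) ^ 2)
    (by norm_num) using 2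
  simp only [neg_mul, map_one, pow_one, mul_neg, map_neg, map_mul, map_sub, algebraMap_X, map_ofNat,
    map_pow, map_add, neg_inj]
  ring

theorem not_isSquare_α_mul : ¬ IsSquare (α * (xP - α) * (xP - β)) := by
  convert not_isSquare_algebraMap_X_sub_C_pow_mul (K := ℚ) (c := 1) odd_one
    (q := 16 * Polynomial.X ^ 2 * (Polynomial.X + 1) ^ 4 * (Polynomial.X - 2) ^ 4)
    (by norm_num) using 2
  simp only [map_one, pow_one, map_mul, map_sub, algebraMap_X, map_ofNat, map_pow, map_add]
  ring

theorem not_isSquare_β_mul : ¬ IsSquare (β * (xP - β) * (xP - α)) := by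
  convert not_isSquare_algebraMap_X_sub_C_pow_mul (K := ℚ) (c := 0) odd_one
    (q := 2 * (Polynomial.X - 1) * (Polynomial.X + 1) ^ 4 * (Polynomial.X + 2) ^ 2
      * (Polynomial.X - 2) ^ 4) (by norm_num) using 2
  simp only [map_zero, sub_zero, pow_one, map_mul, algebraMap_X, map_ofNat, map_sub, map_one,
    map_pow, map_add]
  ring

theorem xP_ne_zero : xP ≠ 0 := by
  intro h
  exact not_isSquare_xP (by rw [h]; exact .zero)

theorem xP_ne_α : xP ≠ α := by
  intro h
  exact not_isSquare_α_mul (by rw [h, sub_self, mul_zero, zero_mul]; exact .zero)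

theorem xP_ne_β : xP ≠ β := by
  intro h
  exact not_isSquare_β_mul (by rw [h, sub_self, mul_zero, zero_mul]; exact .zero)

theorem nonsingular_P : Ecurve.Nonsingular xP yP := by
  have hcurve : yP ^ 2 = (xP - 0) * (xP - α) * (xP - β) := by ring
  refine isSplitCubic_Ecurve.nonsingular_of_two_mul_ne_zero hcurve
    (mul_ne_zero two_ne_zero fun hy => ?_)
  rw [hy, sub_zero] at hcurve
  exact mul_ne_zero (mul_ne_zero xP_ne_zero (sub_ne_zero.mpr xP_ne_α)) (sub_ne_zero.mpr xP_ne_β)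
    (by rw [← hcurve]; ring)

end

open Classical in
/-- the point `P = (2t³(t+1), 2t²(t+1)²(t-2)²)` on `E` has infinite order
in `E(ℚ(t))`, i.e. `nP ≠ O` for all `n ≥ 1`. -/
theorem stmt_15 :
    ∃ h : Ecurve.Nonsingular (2 * X ^ 3 * (X + 1)) (2 * X ^ 2 * (X + 1) ^ 2 * (X - 2) ^ 2),
      ∀ n : ℕ, 1 ≤ n → n • (WeierstrassCurve.Affine.Point.some _ _ h) ≠ 0 := by
  refine ⟨nonsingular_P, fun n hn hnP => ?_⟩
  have hE := isSplitCubic_Ecurve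
  rcases (isOfFinAddOrder_iff_nsmul_eq_zero.mpr ⟨n, hn, hnP⟩).exists_eq_two_nsmul_or_two_torsion
    with ⟨Q, hQ⟩ | ⟨T, hT0, hT2, hTQ⟩
  · exact not_isSquare_xP (by simpa only [sub_zero] using hE.isSquare_X_sub_of_eq_two_nsmul hQ)
  obtain ⟨e, hT, rfl, rfl | rfl | rfl⟩ :=
    hE.exists_eq_some_of_two_nsmul_eq_zero two_ne_zero hT0 hT2
  · rcases hTQ with ⟨Q, hQ⟩ | ⟨Q, hQ⟩
    · exact not_isSquare_neg_α (by
        simpa only [zero_sub] using hE.swap₁₂.isSquare_X_sub_of_eq_two_nsmul hQ)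
    · exact not_isSquare_neg_α_mul (by
        simpa only [zero_sub, sub_zero] using hE.isSquare_mul_of_add_eq_two_nsmul xP_ne_zero hQ)
  · rcases hTQ with ⟨Q, hQ⟩ | ⟨Q, hQ⟩
    · exact not_isSquare_α (by simpa only [sub_zero] using hE.isSquare_X_sub_of_eq_two_nsmul hQ)
    · exact not_isSquare_α_mul (by
        simpa only [sub_zero] using hE.swap₁₂.isSquare_mul_of_add_eq_two_nsmul xP_ne_α hQ)
  · rcases hTQ with ⟨Q, hQ⟩ | ⟨Q, hQ⟩
    · exact not_isSquare_β (by simpa only [sub_zero] using hE.isSquare_X_sub_of_eq_two_nsmul hQ)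
    · exact not_isSquare_β_mul (by
        simpa only [sub_zero] using
          hE.swap₂₃.swap₁₂.isSquare_mul_of_add_eq_two_nsmul xP_ne_β hQ)
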